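/- For a coherent agent program, radical upgrade by φ results in belief of φ: in the revised program ag_{⇑φ}, where the belief base B' consists of the knowledge K at rank 0, the formula φ at rank 1, and each former belief (ψ, i) shifted to rank i+2, if K ∪ {φ} is propositionally consistent then the maximal consistent subset (B')^Max entails φ, i.e. ag_{⇑φ} ⊨ B(φ). -/
import Mathlib


variable {P : Type} [DecidableEq P]

abbrev Lit (P : Type) := P × Bool

def Lit.negate (l : Lit P) : Lit P := (l.1, !l.2)

def ConsistentLits (S : Finset (Lit P)) : Prop := ∀ l ∈ S, l.negate ∉ S

/-- A world satisfies a literal. -/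
def satLit (w : P → Bool) (l : Lit P) : Prop := w l.1 = l.2

open Classical in
/-- Greedy maximal-consistent-subset algorithm, processing strata `0,…,n-1`. -/
noncomputable def greedy (strata : ℕ → Finset (Lit P)) : ℕ → Finset (Lit P)
  | 0 => ∅
  | i + 1 =>
    let acc := greedy strata i
    if (∃ l ∈ strata i, l.negate ∈ strata i) ∨ (∃ l ∈ strata i, l.negate ∈ acc)
    then acc
    else acc ∪ strata i

/-- The revised belief base `B'` of the radical upgrade by `φ`: the knowledge
`K` at rank 0, `φ` at rank 1, and each former belief stratum shifted up by 2.
Conjunctive formulas and strata are represented by their sets of literals. -/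
def revisedBase (litsK φlits : Finset (Lit P)) (strataB : ℕ → Finset (Lit P)) :
    ℕ → Finset (Lit P)
  | 0 => litsK
  | 1 => φlits
  | i + 2 => strataB i

lemma greedy_mono (strata : ℕ → Finset (Lit P)) (i : ℕ) :
    greedy strata i ⊆ greedy strata (i + 1) := by
  rw [greedy]
  split <;> simp [Finset.subset_union_left]

lemma greedy_mono' (strata : ℕ → Finset (Lit P)) {i j : ℕ} (h : i ≤ j) :
    greedy strata i ⊆ greedy strata j := by
  induction j with
  | zero => simp [Nat.le_zero.mp h]
  | succ k ih =>
    rcases Nat.lt_or_ge i (k+1) with h' | h'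
    · exact (ih (Nat.lt_succ_iff.mp h')).trans (greedy_mono strata k)
    · have : i = k + 1 := le_antisymm h h'
      subst this; exact Finset.Subset.refl _

lemma phi_subset (litsK φlits : Finset (Lit P)) (strataB : ℕ → Finset (Lit P))
    (hK : ConsistentLits litsK) (hφ : ConsistentLits φlits)
    (hKφ : ConsistentLits (litsK ∪ φlits)) :
    φlits ⊆ greedy (revisedBase litsK φlits strataB) 2 := by
  have h1 : greedy (revisedBase litsK φlits strataB) 1 = litsK := by
    rw [greedy]
    have : ¬ ((∃ l ∈ revisedBase litsK φlits strataB 0,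
        l.negate ∈ revisedBase litsK φlits strataB 0) ∨
        (∃ l ∈ revisedBase litsK φlits strataB 0,
        l.negate ∈ greedy (revisedBase litsK φlits strataB) 0)) := by
      push_neg
      refine ⟨fun l hl => hK l hl, fun l hl => ?_⟩
      simp [greedy]
    simp only [this, if_false]
    simp [greedy, revisedBase]
  rw [greedy]
  have hcond : ¬ ((∃ l ∈ revisedBase litsK φlits strataB 1,
      l.negate ∈ revisedBase litsK φlits strataB 1) ∨
      (∃ l ∈ revisedBase litsK φlits strataB 1,
      l.negate ∈ greedy (revisedBase litsK φlits strataB) 1)) := by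
    push_neg
    constructor
    · intro l hl; exact hφ l hl
    · intro l hl
      rw [h1]
      intro hneg
      exact hKφ l (Finset.mem_union_right _ hl) (Finset.mem_union_left _ hneg)
  simp only [hcond, if_false]
  intro l hl
  exact Finset.mem_union_right _ hl

/-- for a coherent agent program, radical upgrade by a consistent
conjunction of literals `φ` that is consistent with `K` results in belief of
`φ`: the maximal consistent subset `(B')^Max` propositionally entails `φ`. -/
theorem radicalUpgrade_belief (litsK φlits : Finset (Lit P))
    (strataB : ℕ → Finset (Lit P)) (n : ℕ)
    (hK : ConsistentLits litsK)
    (hφ : ConsistentLits φlits)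
    (hKφ : ConsistentLits (litsK ∪ φlits)) :
    ∀ w : P → Bool,
      (∀ l ∈ greedy (revisedBase litsK φlits strataB) (n + 3), satLit w l) →
      ∀ l ∈ φlits, satLit w l := by
  intro w hw l hl
  exact hw l (greedy_mono' _ (by omega : 2 ≤ n + 3)
    (phi_subset litsK φlits strataB hK hφ hKφ hl))
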